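/- If (α_n) ⊆ [0,1] is a Cauchy sequence for the Farey metric d_F whose Euclidean limit α is irrational, then (α_n) converges to α in the Farey metric d_F. -/

import Mathlib

/-- The set of `m`-Farey numbers viewed inside `ℝ`: rationals in `[0,1]` with
(reduced) denominator at most `m`. -/
def FareyRe (m : ℕ) : Set ℝ :=
  {x | ∃ q : ℚ, (q : ℝ) = x ∧ 0 ≤ q ∧ q ≤ 1 ∧ q.den ≤ m}

/-- `s = r^*` is the upper Farey neighbor of `r` in `F_m`: the smallest element of
`F_m` strictly above `r`. -/
def IsUpperNbr (m : ℕ) (r s : ℝ) : Prop :=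
  IsLeast {t | t ∈ FareyRe m ∧ r < t} s

/-- The Farey metric on `[0,1]`. -/
noncomputable def dF (α β : ℝ) : ℝ :=
  if α = β then 0
  else if α = 0 ∨ α = 1 ∨ β = 0 ∨ β = 1 then 1
  else sInf {d : ℝ | ∃ m : ℕ, 1 ≤ m ∧ d = 1 / (m + 1) ∧
    ∃ r s : ℝ, r ∈ FareyRe m ∧ IsUpperNbr m r s ∧
      α ∈ Set.Ioo r s ∧ β ∈ Set.Ioo r s}

lemma fareyRe_nonneg {m : ℕ} {x : ℝ} (hx : x ∈ FareyRe m) : 0 ≤ x := by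
  obtain ⟨q, rfl, hq0, hq1, hqd⟩ := hx
  exact_mod_cast hq0

lemma fareyRe_le_one {m : ℕ} {x : ℝ} (hx : x ∈ FareyRe m) : x ≤ 1 := by
  obtain ⟨q, rfl, hq0, hq1, hqd⟩ := hx
  exact_mod_cast hq1

lemma fareyRe_not_irrational {m : ℕ} {x : ℝ} (hx : x ∈ FareyRe m) : ¬ Irrational x := by
  obtain ⟨q, rfl, _, _, _⟩ := hx
  exact Rat.not_irrational q

lemma zero_mem_fareyRe {m : ℕ} (hm : 1 ≤ m) : (0 : ℝ) ∈ FareyRe m :=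
  ⟨0, by norm_num, le_refl 0, by norm_num, by simpa using hm⟩

lemma one_mem_fareyRe {m : ℕ} (hm : 1 ≤ m) : (1 : ℝ) ∈ FareyRe m :=
  ⟨1, by norm_num, by norm_num, le_refl 1, by simpa using hm⟩

lemma fareyRe_finite (m : ℕ) : (FareyRe m).Finite := by
  have h : FareyRe m ⊆
      (fun p : ℤ × ℕ => ((p.1 : ℝ) / (p.2 : ℝ))) ''
        (Set.Icc 0 (m : ℤ) ×ˢ Set.Icc 1 m) := by
    rintro x ⟨q, rfl, hq0, hq1, hqd⟩
    have hden : 0 < (q.den : ℚ) := by exact_mod_cast q.pos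
    have hnum0 : 0 ≤ q.num := Rat.num_nonneg.mpr hq0
    have hnumden : q.num ≤ (q.den : ℤ) := by
      have := Rat.num_le_denom_iff.mpr hq1
      simpa using this
    have hnumm : q.num ≤ (m : ℤ) := le_trans hnumden (by exact_mod_cast hqd)
    refine ⟨(q.num, q.den), ⟨⟨hnum0, hnumm⟩, q.pos, hqd⟩, ?_⟩
    simp [Rat.cast_def]
  exact (((Set.finite_Icc 0 (m : ℤ)).prod (Set.finite_Icc 1 m)).image _).subset h

lemma dF_le {m : ℕ} (hm : 1 ≤ m) {α β r s : ℝ} (hr : r ∈ FareyRe m)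
    (hs : IsUpperNbr m r s) (hα : α ∈ Set.Ioo r s) (hβ : β ∈ Set.Ioo r s) :
    dF α β ≤ 1 / (m + 1) := by
  have hpos : (0 : ℝ) < 1 / ((m : ℝ) + 1) := by positivity
  by_cases hab : α = β
  · rw [dF, if_pos hab]; exact le_of_lt hpos
  have hsF : s ∈ FareyRe m := hs.1.1
  have hr0 : 0 ≤ r := fareyRe_nonneg hr
  have hs1 : s ≤ 1 := fareyRe_le_one hsF
  have hα0 : α ≠ 0 := ne_of_gt (lt_of_le_of_lt hr0 hα.1)
  have hα1 : α ≠ 1 := ne_of_lt (lt_of_lt_of_le hα.2 hs1)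
  have hβ0 : β ≠ 0 := ne_of_gt (lt_of_le_of_lt hr0 hβ.1)
  have hβ1 : β ≠ 1 := ne_of_lt (lt_of_lt_of_le hβ.2 hs1)
  rw [dF, if_neg hab, if_neg (by push_neg; exact ⟨hα0, hα1, hβ0, hβ1⟩)]
  apply csInf_le
  · refine ⟨0, ?_⟩
    rintro d ⟨m', _, rfl, _⟩
    positivity
  · exact ⟨m, hm, rfl, r, s, hr, hs, hα, hβ⟩

theorem stmt_13 (a : ℕ → ℝ) (ha : ∀ n, a n ∈ Set.Icc (0 : ℝ) 1)
    (hcauchy : ∀ ε > (0 : ℝ), ∃ N : ℕ, ∀ j ≥ N, ∀ k ≥ N, dF (a j) (a k) < ε)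
    (α : ℝ) (hlim : Filter.Tendsto a Filter.atTop (nhds α))
    (hirr : Irrational α) :
    ∀ ε > (0 : ℝ), ∃ N : ℕ, ∀ n ≥ N, dF (a n) α < ε := by
  intro ε hε
  obtain ⟨n0, hn0⟩ := exists_nat_gt (1 / ε)
  set m : ℕ := n0 + 1 with hmdef
  have hm1 : 1 ≤ m := Nat.le_add_left 1 n0
  have hmε : 1 / ((m : ℝ) + 1) < ε := by
    rw [div_lt_iff₀ (by positivity)]
    have h1 : ε * (1 / ε) = 1 := mul_one_div_cancel (ne_of_gt hε)
    have hcast : ((m : ℝ)) = (n0 : ℝ) + 1 := by push_cast [hmdef]; ring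
    nlinarith
  -- α ∈ (0,1)
  have hα01 : α ∈ Set.Icc (0 : ℝ) 1 :=
    isClosed_Icc.mem_of_tendsto hlim (Filter.Eventually.of_forall ha)
  have hα0 : 0 < α := lt_of_le_of_ne hα01.1 (Ne.symm hirr.ne_zero)
  have hα1 : α < 1 := lt_of_le_of_ne hα01.2 hirr.ne_one
  -- build r : greatest element of F_m below α
  have hFfin := fareyRe_finite m
  set S₁ : Set ℝ := {t | t ∈ FareyRe m ∧ t < α} with hS₁def
  have hS₁fin : S₁.Finite := hFfin.subset (fun t ht => ht.1)
  have hS₁ne : S₁.Nonempty := ⟨0, zero_mem_fareyRe hm1, hα0⟩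
  obtain ⟨r, hrS, hrmax⟩ := Set.Finite.exists_maximalFor id S₁ hS₁fin hS₁ne
  have hrF : r ∈ FareyRe m := hrS.1
  have hrα : r < α := hrS.2
  have hrgreatest : ∀ b ∈ S₁, b ≤ r := by
    intro b hb
    by_contra hbr
    push_neg at hbr
    exact absurd (hrmax hb (le_of_lt hbr)) (not_le.mpr hbr)
  -- build s : least element of F_m above r
  set S₂ : Set ℝ := {t | t ∈ FareyRe m ∧ r < t} with hS₂def
  have hS₂fin : S₂.Finite := hFfin.subset (fun t ht => ht.1)
  have hS₂ne : S₂.Nonempty := ⟨1, one_mem_fareyRe hm1, lt_trans hrα hα1⟩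
  obtain ⟨s, hsS, hsmin⟩ := Set.Finite.exists_minimalFor id S₂ hS₂fin hS₂ne
  have hsleast : ∀ b ∈ S₂, s ≤ b := by
    intro b hb
    by_contra hbs
    push_neg at hbs
    exact absurd (hsmin hb (le_of_lt hbs)) (not_le.mpr hbs)
  have hupper : IsUpperNbr m r s := ⟨hsS, hsleast⟩
  have hαs : α < s := by
    rcases lt_or_ge α s with h | h
    · exact h
    · have hne : s ≠ α := fun h' => fareyRe_not_irrational hsS.1 (h' ▸ hirr)
      have hsα : s < α := lt_of_le_of_ne h (fun h' => hne h')
      have : s ∈ S₁ := ⟨hsS.1, hsα⟩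
      exact absurd (hrgreatest s this) (not_le.mpr hsS.2)
  -- eventually a n ∈ Ioo r s
  have hmem : a ⁻¹' Set.Ioo r s ∈ Filter.atTop := hlim (Ioo_mem_nhds hrα hαs)
  obtain ⟨N, hN⟩ := Filter.mem_atTop_sets.mp hmem
  refine ⟨N, fun n hn => ?_⟩
  have han : a n ∈ Set.Ioo r s := hN n hn
  exact lt_of_le_of_lt (dF_le hm1 hrF hupper han ⟨hrα, hαs⟩) hmε
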